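/- Let n ≥ 1, let Ā ∈ ℝ^{n×n} be a constant matrix, let S : ℝ → ℝ^{n×n} be continuous, and let T : ℝ → ℝ^{n×n} be differentiable with T'(t) = S(t) T(t) for all t, T(t) invertible for all t, and T(t) Ā = Ā T(t) for all t. Define Φ(t, τ) := T(t) · exp((t − τ) Ā) · T(τ)⁻¹. Then: (i) Φ(τ, τ) = I_n for all τ; (ii) for each fixed τ, the map t ↦ Φ(t, τ) is differentiable with derivative (Ā + S(t)) Φ(t, τ); (iii) Φ(t₃, t₂) Φ(t₂, t₁) = Φ(t₃, t₁) for all t₁, t₂, t₃; and (iv) Φ(t, τ)⁻¹ = Φ(τ, t). Hence Φ is the state transition matrix associated with A(t) := Ā + S(t). -/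

import Mathlib

open Matrix

private lemma exp_entry_deriv {n : ℕ} (Abar : Matrix (Fin n) (Fin n) ℝ) (τ : ℝ)
    (i j : Fin n) (t : ℝ) :
    HasDerivAt (fun s : ℝ => (NormedSpace.exp ((s - τ) • Abar)) i j)
      ((NormedSpace.exp ((t - τ) • Abar) * Abar) i j) t := by
  letI : NormedRing (Matrix (Fin n) (Fin n) ℝ) := Matrix.linftyOpNormedRing
  letI : NormedAlgebra ℝ (Matrix (Fin n) (Fin n) ℝ) := Matrix.linftyOpNormedAlgebra
  have hM : HasDerivAt (fun s : ℝ => NormedSpace.exp ((s - τ) • Abar))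
      (NormedSpace.exp ((t - τ) • Abar) * Abar) t := by
    have h1 := hasDerivAt_exp_smul_const (𝕂 := ℝ) Abar (t - τ)
    have h2 : HasDerivAt (fun s : ℝ => s - τ) 1 t := (hasDerivAt_id t).sub_const τ
    have h3 := h1.scomp t h2
    simp only [Function.comp_def, one_smul] at h3
    exact h3
  have hb : ∀ A : Matrix (Fin n) (Fin n) ℝ, ‖A i j‖ ≤ 1 * ‖A‖ := by
    intro A
    rw [one_mul]
    have h1 : ‖A i j‖₊ ≤ ∑ j', ‖A i j'‖₊ :=
      Finset.single_le_sum (f := fun j' => ‖A i j'‖₊) (fun _ _ => zero_le) (Finset.mem_univ j)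
    have h2 : (∑ j', ‖A i j'‖₊) ≤ Finset.univ.sup (fun i => ∑ j', ‖A i j'‖₊) :=
      Finset.le_sup (f := fun i => ∑ j', ‖A i j'‖₊) (Finset.mem_univ i)
    have h3 := (h1.trans h2)
    rw [← Matrix.linfty_opNNNorm_def] at h3
    exact_mod_cast h3
  let L : Matrix (Fin n) (Fin n) ℝ →L[ℝ] ℝ :=
    LinearMap.mkContinuous
      { toFun := fun A => A i j, map_add' := fun _ _ => rfl, map_smul' := fun _ _ => rfl } 1 hb
  exact L.hasFDerivAt.comp_hasDerivAt t hM

private lemma entry_mul_deriv {n : ℕ} {f g : ℝ → Matrix (Fin n) (Fin n) ℝ}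
    {f' g' : Matrix (Fin n) (Fin n) ℝ} {t : ℝ}
    (hf : ∀ i j, HasDerivAt (fun s => f s i j) (f' i j) t)
    (hg : ∀ i j, HasDerivAt (fun s => g s i j) (g' i j) t)
    (i j : Fin n) :
    HasDerivAt (fun s => (f s * g s) i j) ((f' * g t + f t * g') i j) t := by
  simp only [Matrix.mul_apply, Matrix.add_apply]
  rw [← Finset.sum_add_distrib]
  exact HasDerivAt.fun_sum fun k _ => (hf i k).mul (hg k j)

/-- If `T' = S T` with `T` invertible and `T Ā = Ā T`, then
`Φ(t, τ) := T(t) exp((t − τ) Ā) T(τ)⁻¹` satisfies: `Φ(τ, τ) = I`;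
`∂_t Φ(t, τ) = (Ā + S(t)) Φ(t, τ)`; the cocycle property
`Φ(t₃, t₂) Φ(t₂, t₁) = Φ(t₃, t₁)`; and `Φ(t, τ)⁻¹ = Φ(τ, t)`.
Hence `Φ` is the state transition matrix associated with `A(t) = Ā + S(t)`. -/
theorem state_transition_matrix_conjugation
    (n : ℕ) (hn : 1 ≤ n)
    (Abar : Matrix (Fin n) (Fin n) ℝ)
    (S T : ℝ → Matrix (Fin n) (Fin n) ℝ)
    (hScont : ∀ i j, Continuous fun t => S t i j)
    (hT' : ∀ i j, ∀ t : ℝ, HasDerivAt (fun s => T s i j) ((S t * T t) i j) t)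
    (hTinv : ∀ t : ℝ, IsUnit (T t))
    (hTcomm : ∀ t : ℝ, T t * Abar = Abar * T t)
    (Φ : ℝ → ℝ → Matrix (Fin n) (Fin n) ℝ)
    (hΦ : ∀ t τ : ℝ, Φ t τ = T t * NormedSpace.exp ((t - τ) • Abar) * (T τ)⁻¹) :
    (∀ τ : ℝ, Φ τ τ = 1) ∧
    (∀ τ : ℝ, ∀ i j, ∀ t : ℝ,
      HasDerivAt (fun s => Φ s τ i j) (((Abar + S t) * Φ t τ) i j) t) ∧
    (∀ t₁ t₂ t₃ : ℝ, Φ t₃ t₂ * Φ t₂ t₁ = Φ t₃ t₁) ∧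
    (∀ t τ : ℝ, (Φ t τ)⁻¹ = Φ τ t) := by
  have hdet : ∀ t : ℝ, IsUnit (T t).det := fun t =>
    (Matrix.isUnit_iff_isUnit_det _).1 (hTinv t)
  have h1 : ∀ τ : ℝ, Φ τ τ = 1 := by
    intro τ
    rw [hΦ, sub_self, zero_smul, NormedSpace.exp_zero, mul_one,
      Matrix.mul_nonsing_inv _ (hdet τ)]
  have h3 : ∀ t₁ t₂ t₃ : ℝ, Φ t₃ t₂ * Φ t₂ t₁ = Φ t₃ t₁ := by
    intro t₁ t₂ t₃
    rw [hΦ, hΦ, hΦ]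
    have hcomm : Commute ((t₃ - t₂) • Abar) ((t₂ - t₁) • Abar) :=
      ((Commute.refl Abar).smul_left _).smul_right _
    have hexp : NormedSpace.exp ((t₃ - t₂) • Abar) * NormedSpace.exp ((t₂ - t₁) • Abar)
        = NormedSpace.exp ((t₃ - t₁) • Abar) := by
      rw [← Matrix.exp_add_of_commute _ _ hcomm, ← add_smul]
      ring_nf
    calc T t₃ * NormedSpace.exp ((t₃ - t₂) • Abar) * (T t₂)⁻¹ *
          (T t₂ * NormedSpace.exp ((t₂ - t₁) • Abar) * (T t₁)⁻¹)
        = T t₃ * NormedSpace.exp ((t₃ - t₂) • Abar) * ((T t₂)⁻¹ * T t₂) *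
          NormedSpace.exp ((t₂ - t₁) • Abar) * (T t₁)⁻¹ := by
          simp only [mul_assoc]
      _ = T t₃ * (NormedSpace.exp ((t₃ - t₂) • Abar) *
            NormedSpace.exp ((t₂ - t₁) • Abar)) * (T t₁)⁻¹ := by
          rw [Matrix.nonsing_inv_mul _ (hdet t₂), mul_one]
          simp only [mul_assoc]
      _ = T t₃ * NormedSpace.exp ((t₃ - t₁) • Abar) * (T t₁)⁻¹ := by rw [hexp]
  refine ⟨h1, ?_, h3, ?_⟩
  · intro τ i j t
    have hE : ∀ i j, HasDerivAt (fun s : ℝ => (NormedSpace.exp ((s - τ) • Abar)) i j)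
        ((NormedSpace.exp ((t - τ) • Abar) * Abar) i j) t := fun i j =>
      exp_entry_deriv Abar τ i j t
    have hTE : ∀ i j, HasDerivAt (fun s => (T s * NormedSpace.exp ((s - τ) • Abar)) i j)
        ((S t * T t * NormedSpace.exp ((t - τ) • Abar)
          + T t * (NormedSpace.exp ((t - τ) • Abar) * Abar)) i j) t := fun i j =>
      entry_mul_deriv (fun i j => hT' i j t) hE i j
    have hC : ∀ i j, HasDerivAt
        (fun _ : ℝ => ((T τ)⁻¹ : Matrix (Fin n) (Fin n) ℝ) i j)
        ((0 : Matrix (Fin n) (Fin n) ℝ) i j) t := by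
      intro i j
      simpa using hasDerivAt_const t (((T τ)⁻¹ : Matrix (Fin n) (Fin n) ℝ) i j)
    have key := entry_mul_deriv
      (f := fun s => T s * NormedSpace.exp ((s - τ) • Abar)) (g := fun _ => (T τ)⁻¹)
      hTE hC i j
    have hfun : (fun s => Φ s τ i j)
        = fun s => ((T s * NormedSpace.exp ((s - τ) • Abar)) * (T τ)⁻¹) i j := by
      funext s; rw [hΦ]
    rw [hfun, hΦ]
    have hEA : NormedSpace.exp ((t - τ) • Abar) * Abar
        = Abar * NormedSpace.exp ((t - τ) • Abar) :=
      (((Commute.refl Abar).smul_left (t - τ)).exp_left).eq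
    have hmat : (S t * T t * NormedSpace.exp ((t - τ) • Abar)
          + T t * (NormedSpace.exp ((t - τ) • Abar) * Abar)) * (T τ)⁻¹
          + (T t * NormedSpace.exp ((t - τ) • Abar)) * 0
        = (Abar + S t) * (T t * NormedSpace.exp ((t - τ) • Abar) * (T τ)⁻¹) := by
      rw [mul_zero, add_zero, hEA, ← mul_assoc (T t) Abar, hTcomm t]
      simp only [add_mul, mul_assoc]
      rw [add_comm]
    rw [← hmat]
    exact key
  · intro t τ
    have hr : Φ t τ * Φ τ t = 1 := by rw [h3 t τ t, h1 t]
    exact Matrix.inv_eq_right_inv hr
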